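/- Let n be odd, μ̄ : Rⁿ → Rⁿ as defined by μ̄(c₀,…,c_{n-1}) = ((1-2u²)^i c_i)_i, Φ : Rⁿ → F_p^{2n} the Gray map, and π : F_p^{2n} → F_p^{2n} the Nechaev permutation induced by τ = (1, n+1)(3, n+3)⋯(n-2, 2n-2) on indices {0,…,2n-1}. Then Φ ∘ μ̄ = π ∘ Φ. -/

import Mathlib

/-! Since `u³ = u`, the unit `λ = 1 - 2u²` satisfies `λ² = 1` and
`λ (a + bu + cu²) = a - bu - (2a + c)u²`: multiplication by `λ` swaps the two Gray coordinates
`-c` and `2a + c` of a ring element. So `μ̄`, which multiplies exactly the odd-indexed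
coordinates by `λ`, acts on Gray images as the transpositions `(i, n + i)`, `i` odd, that make up `τ`. -/

open Polynomial

abbrev Rp (p : ℕ) := AdjoinRoot (X ^ 3 - X : (ZMod p)[X])
noncomputable def uu (p : ℕ) : Rp p := AdjoinRoot.root _
noncomputable def lam (p : ℕ) : Rp p := 1 - 2 * uu p ^ 2
noncomputable def am (p : ℕ) : ZMod p →+* Rp p := algebraMap (ZMod p) (Rp p)

noncomputable def enc (p n : ℕ) (a b c : Fin n → ZMod p) : Fin n → Rp p :=
  fun i => am p (a i) + am p (b i) * uu p + am p (c i) * uu p ^ 2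

def grayOut (p n : ℕ) (a c : Fin n → ZMod p) : Fin (2 * n) → ZMod p :=
  fun j =>
    if h : (j : ℕ) < n then - c ⟨j, h⟩
    else 2 * a ⟨(j : ℕ) - n, by have := j.isLt; omega⟩ +
      c ⟨(j : ℕ) - n, by have := j.isLt; omega⟩

/-- The permutation `μ̄(c₀,…,c_{n-1}) = ((1-2u²)^i cᵢ)ᵢ` of `Rⁿ`. -/
noncomputable def mubar (p n : ℕ) (r : Fin n → Rp p) : Fin n → Rp p :=
  fun i => lam p ^ (i : ℕ) * r i

/-- The permutation `τ = (1,n+1)(3,n+3)⋯(n-2,2n-2)` of `{0,…,2n-1}`. -/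
def tau (n : ℕ) : Fin (2 * n) → Fin (2 * n) := fun j =>
  if h : (j : ℕ) < n ∧ (j : ℕ) % 2 = 1 then ⟨(j : ℕ) + n, by have := j.isLt; omega⟩
  else if h' : n ≤ (j : ℕ) ∧ ((j : ℕ) - n) % 2 = 1 then
    ⟨(j : ℕ) - n, by have := j.isLt; omega⟩
  else j

/-- The Nechaev permutation of `F_p^{2n}`. -/
def nechaev (p n : ℕ) (x : Fin (2 * n) → ZMod p) : Fin (2 * n) → ZMod p :=
  fun j => x (tau n j)

theorem PowerBasis.exists_eq_add_mul_add_mul_sq {R S : Type*} [CommRing R] [Ring S]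
    [Algebra R S] (pb : PowerBasis R S) (hdim : pb.dim = 3) (y : S) :
    ∃ a b c : R, y = algebraMap R S a + algebraMap R S b * pb.gen +
      algebraMap R S c * pb.gen ^ 2 := by
  nontriviality S
  obtain ⟨f, hf, rfl⟩ := pb.exists_eq_aeval y
  refine ⟨f.coeff 0, f.coeff 1, f.coeff 2, ?_⟩
  rw [aeval_eq_sum_range' (hdim ▸ hf)]
  simp only [Finset.sum_range_succ, Finset.sum_range_zero, Algebra.smul_def, zero_add, pow_zero,
    mul_one, pow_one]

section CubicGrayRing

variable (p n : ℕ)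

lemma exists_eq_am_add_am_mul_uu_add_am_mul_uu_sq (x : Rp p) :
    ∃ a b c : ZMod p, x = am p a + am p b * uu p + am p c * uu p ^ 2 := by
  cases subsingleton_or_nontrivial (ZMod p)
  · have : Subsingleton (Rp p) := Module.subsingleton (ZMod p) _
    exact ⟨0, 0, 0, Subsingleton.elim _ _⟩
  · have hmonic : (X ^ 3 - X : (ZMod p)[X]).Monic := by monicity!
    exact (AdjoinRoot.powerBasis' hmonic).exists_eq_add_mul_add_mul_sq
      (by simp only [AdjoinRoot.powerBasis'_dim]; compute_degree!) x

lemma exists_enc_eq (r : Fin n → Rp p) : ∃ a b c, enc p n a b c = r := by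
  choose a b c hr using fun i => exists_eq_am_add_am_mul_uu_add_am_mul_uu_sq p (r i)
  exact ⟨a, b, c, funext fun i => (hr i).symm⟩

lemma uu_pow_three : uu p ^ 3 = uu p := by
  have h : AdjoinRoot.mk (X ^ 3 - X : (ZMod p)[X]) (X ^ 3 - X) = 0 := AdjoinRoot.mk_self
  rwa [map_sub, map_pow, AdjoinRoot.mk_X, sub_eq_zero] at h

lemma lam_sq : lam p ^ 2 = 1 := by
  unfold lam
  linear_combination 4 * uu p * uu_pow_three p

lemma lam_mul_am_add_am_mul_uu_add_am_mul_uu_sq (a b c : ZMod p) :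
    lam p * (am p a + am p b * uu p + am p c * uu p ^ 2) =
      am p a + am p (-b) * uu p + am p (-(2 * a + c)) * uu p ^ 2 := by
  simp only [map_neg, map_add, map_mul, map_ofNat]
  unfold lam
  linear_combination (-2 * am p b - 2 * am p c * uu p) * uu_pow_three p

lemma mubar_enc (a b c : Fin n → ZMod p) :
    mubar p n (enc p n a b c) =
      enc p n a (fun i => if (i : ℕ) % 2 = 1 then -b i else b i)
        (fun i => if (i : ℕ) % 2 = 1 then -(2 * a i + c i) else c i) := by
  funext i
  rw [mubar, pow_eq_pow_mod _ (lam_sq p)]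
  rcases Nat.mod_two_eq_zero_or_one i with h | h
  · simp only [enc, h, pow_zero, one_mul, zero_ne_one, if_false]
  · simp only [enc, h, pow_one, if_true, lam_mul_am_add_am_mul_uu_add_am_mul_uu_sq]

lemma nechaev_grayOut (a c : Fin n → ZMod p) :
    nechaev p n (grayOut p n a c) =
      grayOut p n a (fun i => if (i : ℕ) % 2 = 1 then -(2 * a i + c i) else c i) := by
  funext j
  have := j.isLt
  by_cases hj : (j : ℕ) < n
  · by_cases hodd : (j : ℕ) % 2 = 1
    · have ht : tau n j = ⟨j + n, by omega⟩ := dif_pos ⟨hj, hodd⟩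
      simp [nechaev, ht, grayOut, hj, hodd]
    · have ht : tau n j = j := by simp [tau, hodd, hj.not_ge]
      simp [nechaev, ht, grayOut, hj, hodd]
  · by_cases hodd : ((j : ℕ) - n) % 2 = 1
    · have ht : tau n j = ⟨j - n, by omega⟩ := by simp [tau, hodd, hj, not_lt.mp hj]
      simp [nechaev, ht, grayOut, hj, hodd, show (j : ℕ) - n < n by omega]
    · have ht : tau n j = j := by simp [tau, hodd, hj]
      simp [nechaev, ht, grayOut, hj, hodd]

end CubicGrayRing

theorem gray_mubar_nechaev_general (p n : ℕ)
    (Φ : (Fin n → Rp p) → Fin (2 * n) → ZMod p)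
    (hΦ : ∀ a b c : Fin n → ZMod p, Φ (enc p n a b c) = grayOut p n a c) :
    Φ ∘ mubar p n = nechaev p n ∘ Φ := by
  funext r
  obtain ⟨a, b, c, rfl⟩ := exists_enc_eq p n r
  simp only [Function.comp_apply, mubar_enc, hΦ, nechaev_grayOut]

theorem gray_mubar_nechaev (p n : ℕ) [Fact p.Prime] (hp : p ≠ 2) (hn : Odd n)
    (Φ : (Fin n → Rp p) → Fin (2 * n) → ZMod p)
    (hΦ : ∀ a b c : Fin n → ZMod p, Φ (enc p n a b c) = grayOut p n a c) :
    Φ ∘ mubar p n = nechaev p n ∘ Φ :=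
  gray_mubar_nechaev_general p n Φ hΦ
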